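/- arXiv:1509.05540 — 2 statements merged into one kernel-verified Lean document; each statement's English description precedes it below -/
import Mathlib

section
/- Let N ≥ 1 and let f ∈ L^1(ℝ^N) satisfy ∫_{ℝ^N} f(x) dx = 0. Then lim_{t → ∞} ‖P_t * f‖_{L^1(ℝ^N)} = 0, where P_t * f denotes the convolution of f with the dilated Poisson kernel P_t. -/
open MeasureTheory Real Filter ENNReal

/-- The normalizing constant of the Poisson kernel on `ℝ^N`. -/
noncomputable def cN (N : ℕ) : ℝ :=
  Real.Gamma (((N : ℝ) + 1) / 2) / Real.pi ^ (((N : ℝ) + 1) / 2)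

/-- The Poisson kernel `P(x) = c_N (1 + ‖x‖²)^{-(N+1)/2}` on `ℝ^N`. -/
noncomputable def P (N : ℕ) (x : EuclideanSpace ℝ (Fin N)) : ℝ :=
  cN N * (1 + ‖x‖ ^ 2) ^ (-(((N : ℝ) + 1) / 2))

/-- The dilated Poisson kernel `P_t(x) = t^{-N} P(x/t)`. -/
noncomputable def Pt (N : ℕ) (t : ℝ) (x : EuclideanSpace ℝ (Fin N)) : ℝ :=
  t ^ (-(N : ℝ)) * P N (t⁻¹ • x)

/-!
Because `∫ f = 0`, one may subtract `P_t x` from the kernel: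
`(P_t * f)(x) = ∫ (P_t (x - y) - P_t x) f y dy`. Tonelli and the scaling `x ↦ x / t` then give
`‖P_t * f‖₁ ≤ ∫ |f y| ‖P (· - y / t) - P‖₁ dy`. For each `y` the inner norm tends to `0` as
`t → ∞` by continuity of translation in `L¹`, and it is at most `2 ‖P‖₁`, so dominated convergence
concludes.
-/

open scoped Topology

theorem integral_mul_eq_integral_sub_const_mul {α : Type*} [MeasurableSpace α] {μ : Measure α}
    {f : α → ℝ} (hf : Integrable f μ) (hmean : ∫ y, f y ∂μ = 0) (g : α → ℝ) (c : ℝ) :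
    ∫ y, g y * f y ∂μ = ∫ y, (g y - c) * f y ∂μ := by
  have hsplit : (fun y => (g y - c) * f y) = (fun y => g y * f y) + fun y => -c * f y := by
    ext y; simp only [Pi.add_apply]; ring
  have hcf : Integrable (fun y => -c * f y) μ := hf.const_mul _
  by_cases hgf : Integrable (fun y => g y * f y) μ
  · rw [hsplit, integral_add' hgf hcf, integral_const_mul, hmean, mul_zero, add_zero]
  · rw [integral_undef hgf, integral_undef]
    rwa [hsplit, integrable_add_iff_integrable_left hcf]

section TranslationModulus

variable {G : Type*} [NormedAddCommGroup G] [MeasurableSpace G] {μ : Measure G} {K : G → ℝ}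

noncomputable def translationModulus (μ : Measure G) (K : G → ℝ) (y : G) : ℝ≥0∞ :=
  ∫⁻ x, ‖K (x - y) - K x‖ₑ ∂μ

@[simp]
theorem translationModulus_zero (μ : Measure G) (K : G → ℝ) : translationModulus μ K 0 = 0 := by
  simp [translationModulus]

variable [BorelSpace G]

theorem translationModulus_le [μ.IsAddRightInvariant] (hK : Integrable K μ) (y : G) :
    translationModulus μ K y ≤ 2 * eLpNorm K 1 μ := by
  have hshift : MeasurePreserving (fun x => x - y) μ μ := measurePreserving_sub_right μ y
  calc translationModulus μ K y = eLpNorm ((K ∘ fun x => x - y) - K) 1 μ := by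
        rw [eLpNorm_one_eq_lintegral_enorm]; rfl
    _ ≤ eLpNorm (K ∘ fun x => x - y) 1 μ + eLpNorm K 1 μ :=
        eLpNorm_sub_le (hK.1.comp_measurePreserving hshift) hK.1 le_rfl
    _ = 2 * eLpNorm K 1 μ := by
        rw [eLpNorm_comp_measurePreserving hK.1 hshift, two_mul]

variable [μ.IsAddLeftInvariant]

theorem translationModulus_eq_edist (hK : MemLp K 1 μ) (y : G) :
    translationModulus μ K y = edist (DomAddAct.mk (-y) +ᵥ hK.toLp K) (hK.toLp K) := by
  rw [Lp.edist_def, eLpNorm_one_eq_lintegral_enorm, translationModulus]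
  refine lintegral_congr_ae ?_
  have htranslate : (hK.toLp K : G → ℝ) ∘ (-y + ·) =ᵐ[μ] K ∘ (-y + ·) :=
    (measurePreserving_add_left μ (-y)).quasiMeasurePreserving.ae_eq_comp hK.coeFn_toLp
  filter_upwards [DomAddAct.vadd_Lp_ae_eq (DomAddAct.mk (-y)) (hK.toLp K), htranslate,
    hK.coeFn_toLp] with x h₁ h₂ h₃
  simp only [Function.comp_apply] at h₂
  rw [Pi.sub_apply, h₁, h₃, Equiv.symm_apply_apply, vadd_eq_add, h₂, neg_add_eq_sub]

theorem continuous_translationModulus [IsLocallyFiniteMeasure μ] [μ.InnerRegularCompactLTTop]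
    (hK : Integrable K μ) : Continuous (translationModulus μ K) := by
  have : Fact ((1 : ℝ≥0∞) ≠ ∞) := ⟨one_ne_top⟩
  have hK1 : MemLp K 1 μ := memLp_one_iff_integrable.mpr hK
  simp_rw [funext (translationModulus_eq_edist hK1)]
  exact ((DomAddAct.continuous_mk.comp continuous_neg).vadd continuous_const).edist
    continuous_const

theorem eLpNorm_integral_mul_le_of_integral_eq_zero [SecondCountableTopology G] [SFinite μ]
    (hK : AEStronglyMeasurable K μ) {f : G → ℝ} (hf : Integrable f μ)
    (hmean : ∫ y, f y ∂μ = 0) :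
    eLpNorm (fun x => ∫ y, K (x - y) * f y ∂μ) 1 μ
      ≤ ∫⁻ y, ‖f y‖ₑ * translationModulus μ K y ∂μ := by
  have hmeas : AEMeasurable (Function.uncurry fun x y => ‖(K (x - y) - K x) * f y‖ₑ)
      (μ.prod μ) :=
    (((hK.comp_quasiMeasurePreserving (quasiMeasurePreserving_sub μ μ)).sub
      hK.comp_fst).mul hf.1.comp_snd).enorm
  rw [eLpNorm_one_eq_lintegral_enorm]
  calc ∫⁻ x, ‖∫ y, K (x - y) * f y ∂μ‖ₑ ∂μ
      ≤ ∫⁻ x, ∫⁻ y, ‖(K (x - y) - K x) * f y‖ₑ ∂μ ∂μ := lintegral_mono fun x => by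
        rw [integral_mul_eq_integral_sub_const_mul hf hmean _ (K x)]
        exact enorm_integral_le_lintegral_enorm _
    _ = ∫⁻ y, ∫⁻ x, ‖(K (x - y) - K x) * f y‖ₑ ∂μ ∂μ := lintegral_lintegral_swap hmeas
    _ = ∫⁻ y, ‖f y‖ₑ * translationModulus μ K y ∂μ := lintegral_congr fun y => by
        simp_rw [enorm_mul]
        rw [lintegral_mul_const' _ _ enorm_ne_top, mul_comm, translationModulus]

end TranslationModulus

section Dilation

open Module

variable {E : Type*} [NormedAddCommGroup E] [NormedSpace ℝ E] [MeasurableSpace E] [BorelSpace E]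
  [FiniteDimensional ℝ E] {μ : Measure E} [μ.IsAddHaarMeasure]

theorem lintegral_comp_smul_of_ne_zero (g : E → ℝ≥0∞) {R : ℝ} (hR : R ≠ 0) :
    ∫⁻ x, g (R • x) ∂μ = ENNReal.ofReal |(R ^ finrank ℝ E)⁻¹| * ∫⁻ x, g x ∂μ := by
  rw [← smul_eq_mul, ← lintegral_smul_measure, ← Measure.map_addHaar_smul μ hR]
  exact (lintegral_map_equiv g (Homeomorph.smulOfNeZero R hR).toMeasurableEquiv).symm

noncomputable def dilateKernel (K : E → ℝ) (t : ℝ) (x : E) : ℝ :=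
  t ^ (-(finrank ℝ E : ℝ)) * K (t⁻¹ • x)

theorem integrable_dilateKernel {K : E → ℝ} (hK : Integrable K μ) {t : ℝ} (ht : t ≠ 0) :
    Integrable (dilateKernel K t) μ :=
  (hK.comp_smul (inv_ne_zero ht)).const_mul _

theorem translationModulus_dilateKernel (K : E → ℝ) {t : ℝ} (ht : 0 < t) (y : E) :
    translationModulus μ (dilateKernel K t) y = translationModulus μ K (t⁻¹ • y) := by
  have hpow : 0 < t ^ finrank ℝ E := pow_pos ht _
  have hfactor : ∀ x, dilateKernel K t (x - y) - dilateKernel K t x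
      = (t ^ finrank ℝ E)⁻¹ * (K (t⁻¹ • x - t⁻¹ • y) - K (t⁻¹ • x)) := fun x => by
    rw [dilateKernel, dilateKernel, Real.rpow_neg ht.le, Real.rpow_natCast, smul_sub, mul_sub]
  simp_rw [translationModulus, hfactor, enorm_mul, Real.enorm_eq_ofReal (inv_pos.2 hpow).le]
  rw [lintegral_const_mul' _ _ ofReal_ne_top,
    lintegral_comp_smul_of_ne_zero (fun u => ‖K (u - t⁻¹ • y) - K u‖ₑ) (inv_ne_zero ht.ne'),
    inv_pow, inv_inv, abs_of_pos hpow, ← mul_assoc, ← ofReal_mul (inv_pos.2 hpow).le,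
    inv_mul_cancel₀ hpow.ne', ofReal_one, one_mul]

theorem tendsto_lintegral_mul_translationModulus_inv_smul {K f : E → ℝ} (hK : Integrable K μ)
    (hf : Integrable f μ) :
    Tendsto (fun t : ℝ => ∫⁻ y, ‖f y‖ₑ * translationModulus μ K (t⁻¹ • y) ∂μ) atTop (𝓝 0) := by
  have hΦ := continuous_translationModulus hK
  have hlim : ∀ y, Tendsto (fun t : ℝ => ‖f y‖ₑ * translationModulus μ K (t⁻¹ • y)) atTop
      (𝓝 0) := fun y => by
    have hsmul : Tendsto (fun t : ℝ => t⁻¹ • y) atTop (𝓝 0) := by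
      simpa using (tendsto_inv_atTop_zero (𝕜 := ℝ)).smul_const y
    simpa using ENNReal.Tendsto.const_mul ((hΦ.tendsto' 0 0 (by simp)).comp hsmul)
      (Or.inr enorm_ne_top)
  have hbound_fin : ∫⁻ y, ‖f y‖ₑ * (2 * eLpNorm K 1 μ) ∂μ ≠ ∞ := by
    rw [lintegral_mul_const'' _ hf.1.enorm]
    exact mul_ne_top hf.2.ne
      (mul_ne_top ofNat_ne_top (memLp_one_iff_integrable.2 hK).eLpNorm_ne_top)
  simpa using tendsto_lintegral_filter_of_dominated_convergence' (f := 0) _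
    (Eventually.of_forall fun t =>
      hf.1.enorm.mul (hΦ.comp (continuous_const_smul t⁻¹)).measurable.aemeasurable)
    (Eventually.of_forall fun t => ae_of_all _ fun y =>
      mul_le_mul_right (translationModulus_le hK _) _)
    hbound_fin (ae_of_all _ hlim)

theorem tendsto_eLpNorm_dilateKernel_conv_of_integral_eq_zero {K f : E → ℝ}
    (hK : Integrable K μ) (hf : Integrable f μ) (hmean : ∫ y, f y ∂μ = 0) :
    Tendsto (fun t : ℝ => eLpNorm (fun x => ∫ y, dilateKernel K t (x - y) * f y ∂μ) 1 μ)
      atTop (𝓝 0) := by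
  refine tendsto_of_tendsto_of_tendsto_of_le_of_le' tendsto_const_nhds
    (tendsto_lintegral_mul_translationModulus_inv_smul hK hf)
    (Eventually.of_forall fun _ => zero_le) ?_
  filter_upwards [eventually_gt_atTop 0] with t ht
  simpa only [translationModulus_dilateKernel K ht] using
    eLpNorm_integral_mul_le_of_integral_eq_zero (integrable_dilateKernel hK ht.ne').1 hf hmean

end Dilation

theorem integrable_P (N : ℕ) : Integrable (P N) := by
  have hdim : (Module.finrank ℝ (EuclideanSpace ℝ (Fin N)) : ℝ) < N + 1 := by simp
  unfold P
  convert (integrable_rpow_neg_one_add_norm_sq (μ := volume) hdim).const_mul (cN N) using 4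
  ring

theorem Pt_eq_dilateKernel (N : ℕ) (t : ℝ) : Pt N t = dilateKernel (P N) t := by
  ext x
  simp [Pt, dilateKernel]

theorem stmt_7_general (N : ℕ) (f : EuclideanSpace ℝ (Fin N) → ℝ)
    (hf : Integrable f volume) (hmean : (∫ x, f x) = 0) :
    Tendsto (fun t : ℝ => eLpNorm (fun x => ∫ y, Pt N t (x - y) * f y) 1 volume)
      atTop (nhds 0) := by
  simp_rw [Pt_eq_dilateKernel]
  exact tendsto_eLpNorm_dilateKernel_conv_of_integral_eq_zero (integrable_P N) hf hmean

theorem stmt_7 (N : ℕ) (hN : 1 ≤ N) (f : EuclideanSpace ℝ (Fin N) → ℝ)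
    (hf : Integrable f volume) (hmean : (∫ x, f x) = 0) :
    Tendsto (fun t : ℝ => eLpNorm (fun x => ∫ y, Pt N t (x - y) * f y) 1 volume)
      atTop (nhds 0) :=
  stmt_7_general N f hf hmean
end

section
/- Let 1 < p < 2. There exists a constant C = C(p) > 0 such that for all real numbers A, B, C', D': | |A|^p − |B|^p − (|C'|^p − |D'|^p) | ≤ C ( |C'|^{p-1} + |D'|^{p-1} ) |A − B − (C' − D')| + C ( |A − C'|^{p-1} + |B − D'|^{p-1} ) |A − B|. -/
/-!
Apply the mean value inequality on `[0, 1]` to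
`t ↦ |B + t (A - B)| ^ p - |D' + t (C' - D')| ^ p`. Its derivative is
`p (φ x (A - B) - φ y (C' - D'))` with `φ x = sign x |x| ^ (p - 1)`, `x = B + t (A - B)` and
`y = D' + t (C' - D')`; split it as `p (φ x - φ y) (A - B) + p φ y (A - B - (C' - D'))`.
Since `0 < p - 1 ≤ 1`, `φ` is `(p - 1)`-Hölder with constant `2`, `x - y` interpolates between
`B - D'` and `A - C'`, and `y` between `D'` and `C'`; subadditivity of `s ↦ s ^ (p - 1)` then
bounds both terms, giving `C = 2 p`.
-/

open Set

section

variable {α : ℝ}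

lemma abs_rpow_sub_rpow_le (hα0 : 0 ≤ α) (hα1 : α ≤ 1) {x y : ℝ} (hx : 0 ≤ x) (hy : 0 ≤ y) :
    |x ^ α - y ^ α| ≤ |x - y| ^ α := by
  wlog hyx : y ≤ x generalizing x y
  · rw [abs_sub_comm, abs_sub_comm x y]; exact this hy hx (le_of_not_ge hyx)
  rw [abs_of_nonneg (sub_nonneg.2 (Real.rpow_le_rpow hy hyx hα0)), abs_of_nonneg (sub_nonneg.2 hyx)]
  have := Real.rpow_add_le_add_rpow (sub_nonneg.2 hyx) hy hα0 hα1
  rw [sub_add_cancel] at this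
  linarith

lemma abs_add_mul_sub_rpow_le (hα0 : 0 ≤ α) (hα1 : α ≤ 1) {t : ℝ} (ht : t ∈ Icc 0 1)
    (a b : ℝ) : |a + t * (b - a)| ^ α ≤ |a| ^ α + |b| ^ α := by
  obtain ⟨ht0, ht1⟩ := ht
  have hconvex : |a + t * (b - a)| ≤ |a| + |b| :=
    calc |a + t * (b - a)| = |(1 - t) * a + t * b| := by ring_nf
      _ ≤ (1 - t) * |a| + t * |b| := by
        refine (abs_add_le _ _).trans_eq ?_
        rw [abs_mul, abs_mul, abs_of_nonneg (sub_nonneg.2 ht1), abs_of_nonneg ht0]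
      _ ≤ |a| + |b| := by nlinarith [abs_nonneg a, abs_nonneg b]
  calc |a + t * (b - a)| ^ α ≤ (|a| + |b|) ^ α := by gcongr
    _ ≤ |a| ^ α + |b| ^ α := Real.rpow_add_le_add_rpow (abs_nonneg a) (abs_nonneg b) hα0 hα1

/-- The odd power `sign x * |x| ^ α`, written in the form in which it appears in
`hasDerivAt_abs_rpow`. -/
noncomputable def signedRpow (α x : ℝ) : ℝ := |x| ^ (α - 1) * x

lemma signedRpow_of_nonneg (hα : 0 < α) {x : ℝ} (hx : 0 ≤ x) : signedRpow α x = x ^ α := by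
  rcases hx.eq_or_lt with rfl | hx
  · simp [signedRpow, Real.zero_rpow hα.ne']
  · rw [signedRpow, abs_of_pos hx, Real.rpow_sub_one hx.ne', div_mul_cancel₀ _ hx.ne']

lemma signedRpow_of_nonpos (hα : 0 < α) {x : ℝ} (hx : x ≤ 0) : signedRpow α x = -(-x) ^ α := by
  rw [← signedRpow_of_nonneg hα (neg_nonneg.2 hx), signedRpow, signedRpow, abs_neg]
  ring

lemma abs_signedRpow (hα : 0 < α) (x : ℝ) : |signedRpow α x| = |x| ^ α := by
  rcases le_total 0 x with hx | hx
  · rw [signedRpow_of_nonneg hα hx, abs_of_nonneg hx, abs_of_nonneg (Real.rpow_nonneg hx α)]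
  · rw [signedRpow_of_nonpos hα hx, abs_neg, abs_of_nonpos hx,
      abs_of_nonneg (Real.rpow_nonneg (neg_nonneg.2 hx) α)]

lemma abs_signedRpow_sub_le (hα0 : 0 < α) (hα1 : α ≤ 1) (x y : ℝ) :
    |signedRpow α x - signedRpow α y| ≤ 2 * |x - y| ^ α := by
  wlog hyx : y ≤ x generalizing x y
  · rw [abs_sub_comm, abs_sub_comm x y]; exact this y x (le_of_not_ge hyx)
  have hdist : 0 ≤ |x - y| ^ α := by positivity
  rcases le_total 0 y with hy | hy
  · rw [signedRpow_of_nonneg hα0 hy, signedRpow_of_nonneg hα0 (hy.trans hyx)]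
    linarith [abs_rpow_sub_rpow_le hα0.le hα1 (hy.trans hyx) hy]
  rcases le_total x 0 with hx | hx
  · have := abs_rpow_sub_rpow_le hα0.le hα1 (neg_nonneg.2 hy) (neg_nonneg.2 hx)
    rw [neg_sub_neg] at this
    rw [signedRpow_of_nonpos hα0 hx, signedRpow_of_nonpos hα0 hy, neg_sub_neg]
    linarith
  -- opposite signs: each of `x ^ α` and `(-y) ^ α` is at most `(x - y) ^ α`
  rw [signedRpow_of_nonneg hα0 hx, signedRpow_of_nonpos hα0 hy, sub_neg_eq_add,
    abs_of_nonneg (add_nonneg (Real.rpow_nonneg hx α) (Real.rpow_nonneg (neg_nonneg.2 hy) α)),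
    abs_of_nonneg (sub_nonneg.2 hyx), two_mul]
  gcongr <;> linarith

lemma hasDerivAt_abs_rpow_signedRpow {p : ℝ} (hp : 1 < p) (x : ℝ) :
    HasDerivAt (fun x : ℝ ↦ |x| ^ p) (p * signedRpow (p - 1) x) x := by
  convert hasDerivAt_abs_rpow x hp using 1
  rw [signedRpow, sub_sub, one_add_one_eq_two, mul_assoc]

lemma abs_signedRpow_segment_deriv_le (hα0 : 0 < α) (hα1 : α ≤ 1) {t : ℝ}
    (ht : t ∈ Icc 0 1) (a b c d : ℝ) :
    |signedRpow α (b + t * (a - b)) * (a - b) - signedRpow α (d + t * (c - d)) * (c - d)|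
      ≤ 2 * ((|c| ^ α + |d| ^ α) * |a - b - (c - d)|)
        + 2 * ((|a - c| ^ α + |b - d| ^ α) * |a - b|) := by
  set x := b + t * (a - b)
  set y := d + t * (c - d)
  have hxy : |signedRpow α x - signedRpow α y| ≤ 2 * (|a - c| ^ α + |b - d| ^ α) := by
    have hsub : x - y = (b - d) + t * ((a - c) - (b - d)) := by ring
    calc |signedRpow α x - signedRpow α y| ≤ 2 * |x - y| ^ α := abs_signedRpow_sub_le hα0 hα1 x y
      _ ≤ 2 * (|b - d| ^ α + |a - c| ^ α) := by
        rw [hsub]; gcongr; exact abs_add_mul_sub_rpow_le hα0.le hα1 ht _ _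
      _ = 2 * (|a - c| ^ α + |b - d| ^ α) := by ring
  have hy : |signedRpow α y| ≤ 2 * (|c| ^ α + |d| ^ α) := by
    rw [abs_signedRpow hα0]
    linarith [abs_add_mul_sub_rpow_le hα0.le hα1 ht d c, Real.rpow_nonneg (abs_nonneg c) α,
      Real.rpow_nonneg (abs_nonneg d) α]
  calc |signedRpow α x * (a - b) - signedRpow α y * (c - d)|
      = |signedRpow α y * (a - b - (c - d)) + (signedRpow α x - signedRpow α y) * (a - b)| := by
        ring_nf
    _ ≤ |signedRpow α y| * |a - b - (c - d)| + |signedRpow α x - signedRpow α y| * |a - b| := by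
        rw [← abs_mul, ← abs_mul]; exact abs_add_le _ _
    _ ≤ 2 * (|c| ^ α + |d| ^ α) * |a - b - (c - d)|
          + 2 * (|a - c| ^ α + |b - d| ^ α) * |a - b| := by
        gcongr
    _ = _ := by ring

end

theorem stmt_10 (p : ℝ) (hp1 : 1 < p) (hp2 : p < 2) :
    ∃ C : ℝ, 0 < C ∧ ∀ A B C' D' : ℝ,
      |(|A| ^ p - |B| ^ p - (|C'| ^ p - |D'| ^ p))|
        ≤ C * ((|C'| ^ (p - 1) + |D'| ^ (p - 1)) * |A - B - (C' - D')|)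
          + C * ((|A - C'| ^ (p - 1) + |B - D'| ^ (p - 1)) * |A - B|) := by
  refine ⟨2 * p, by positivity, fun A B C' D' ↦ ?_⟩
  have hsegment (a b t : ℝ) : HasDerivAt (fun t ↦ |b + t * (a - b)| ^ p)
      (p * (signedRpow (p - 1) (b + t * (a - b)) * (a - b))) t := by
    rw [← mul_assoc]
    exact (hasDerivAt_abs_rpow_signedRpow hp1 _).comp t ((hasDerivAt_mul_const (a - b)).const_add b)
  have hmvt := norm_image_sub_le_of_norm_deriv_le_segment_01'
    (fun t _ ↦ ((hsegment A B t).sub (hsegment C' D' t)).hasDerivWithinAt)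
    (C := p * (2 * ((|C'| ^ (p - 1) + |D'| ^ (p - 1)) * |A - B - (C' - D')|)
      + 2 * ((|A - C'| ^ (p - 1) + |B - D'| ^ (p - 1)) * |A - B|)))
    (fun t ht ↦ by
      rw [Real.norm_eq_abs, ← mul_sub, abs_mul, abs_of_pos (by linarith)]
      gcongr
      exact abs_signedRpow_segment_deriv_le (by linarith) (by linarith) (Ico_subset_Icc_self ht) ..)
  simp only [Pi.sub_apply, one_mul, zero_mul, add_zero, add_sub_cancel, Real.norm_eq_abs] at hmvt
  convert hmvt using 1 <;> ring_nf
end
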